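/- If q = (q_k) is a sequence with q_k > 1 and ∑_{k≥1} 1/q_k < ∞, then for every real p the weighted ℓ²-type embedding L^{p+1}_{2,q} ⊂ L^p_{2,q} is Hilbert–Schmidt; equivalently, ∑_{α ∈ J} q^{−2α} < ∞ where q^{−2α} = ∏_k q_k^{−2α_k}. -/

import Mathlib

open scoped BigOperators

noncomputable section

abbrev MultiIndex := ℕ →₀ ℕ

/-- `r^α = ∏ₖ r_k^{α_k}` -/
def mpow (r : ℕ → ℝ) (α : MultiIndex) : ℝ := ∏ k ∈ α.support, r k ^ α k

/-- `α! = ∏ₖ α_k!` -/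
def mfact (α : MultiIndex) : ℕ := ∏ k ∈ α.support, (α k).factorial

/-- generalized binomial coefficient `C(α,β) = ∏ₖ C(α_k, β_k)` -/
def mchoose (α β : MultiIndex) : ℕ :=
  ∏ k ∈ α.support ∪ β.support, Nat.choose (α k) (β k)

/-- `|α| = ∑ₖ α_k` -/
def mdeg (α : MultiIndex) : ℕ := ∑ k ∈ α.support, α k

/-! The sum over multi-indices factors coordinatewise into geometric series: over the
multi-indices supported in a finite set `F` it is `∏_{k ∈ F} (1 - r_k)⁻¹`, and these finite
products increase to the infinite product, which converges because `∑ r_k < ∞`. Since the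
terms are nonnegative, every finite partial sum over multi-indices is dominated by one of these
finite products, and each finite product is the sum over a subfamily, so the sum and the product
agree. -/

section Finsupp

variable {ι M : Type*} [DecidableEq ι] [AddZeroClass M]

def supportSubsetInsertEquiv {a : ι} {F : Finset ι} (ha : a ∉ F) :
    M × {α : ι →₀ M // α.support ⊆ F} ≃ {α : ι →₀ M // α.support ⊆ insert a F} where
  toFun p := ⟨p.2 + Finsupp.single a p.1, fun k hk => by
    rcases Finset.mem_union.mp (Finsupp.support_add hk) with h | h
    · exact Finset.mem_insert_of_mem (p.2.2 h)
    · exact Finset.mem_insert.mpr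
        (.inl (Finset.mem_singleton.mp (Finsupp.support_single_subset h)))⟩
  invFun β := (β.1 a, ⟨β.1.erase a, fun k hk => by
    rw [Finsupp.support_erase, Finset.mem_erase] at hk
    exact (Finset.mem_insert.mp (β.2 hk.2)).resolve_left hk.1⟩)
  left_inv := by
    rintro ⟨n, α, hα⟩
    have hαa : α a = 0 := Finsupp.notMem_support_iff.mp fun h => ha (hα h)
    ext k
    · simp [hαa]
    · by_cases hk : k = a
      · simp [hk, hαa]
      · simp [Finsupp.erase_ne hk]
  right_inv β := Subtype.ext (Finsupp.erase_add_single a β.1)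

end Finsupp

section mpow

variable {r : ℕ → ℝ}

@[simp]
lemma mpow_zero (r : ℕ → ℝ) : mpow r 0 = 1 := by
  simp [mpow]

lemma mpow_add (r : ℕ → ℝ) (α β : MultiIndex) : mpow r (α + β) = mpow r α * mpow r β :=
  Finsupp.prod_add_index' (fun _ => pow_zero _) (fun _ _ _ => pow_add _ _ _)

lemma mpow_single (r : ℕ → ℝ) (a n : ℕ) : mpow r (Finsupp.single a n) = r a ^ n :=
  Finsupp.prod_single_index (pow_zero _)

lemma mpow_nonneg (hr0 : ∀ k, 0 ≤ r k) (α : MultiIndex) : 0 ≤ mpow r α :=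
  Finset.prod_nonneg fun k _ => pow_nonneg (hr0 k) _

lemma hasSum_mpow_of_support_subset (hr0 : ∀ k, 0 ≤ r k) (hr1 : ∀ k, r k < 1)
    (F : Finset ℕ) :
    HasSum (fun α : {α : MultiIndex // α.support ⊆ F} => mpow r α) (∏ k ∈ F, (1 - r k)⁻¹) := by
  induction F using Finset.induction_on with
  | empty =>
    have h_eq_zero (α : {α : MultiIndex // α.support ⊆ ∅}) : α = ⟨0, by simp⟩ :=
      Subtype.ext (Finsupp.support_eq_empty.mp (Finset.subset_empty.mp α.2))
    simpa using hasSum_single (f := fun α : {α : MultiIndex // α.support ⊆ ∅} => mpow r α)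
      ⟨0, by simp⟩ fun α hα => absurd (h_eq_zero α) hα
  | @insert a F ha ih =>
    rw [Finset.prod_insert ha, ← (supportSubsetInsertEquiv ha).hasSum_iff]
    have hgeom : HasSum (fun n : ℕ => r a ^ n) (1 - r a)⁻¹ :=
      hasSum_geometric_of_lt_one (hr0 a) (hr1 a)
    refine (hgeom.mul ih (hgeom.summable.mul_of_nonneg ih.summable (fun n => pow_nonneg (hr0 a) n)
      fun α => mpow_nonneg hr0 _)).congr_fun fun p => ?_
    simp [supportSubsetInsertEquiv, mpow_add, mpow_single, mul_comm]

lemma sum_mpow_le_prod (hr0 : ∀ k, 0 ≤ r k) (hr1 : ∀ k, r k < 1) {u : Finset MultiIndex}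
    {F : Finset ℕ} (hu : ∀ α ∈ u, α.support ⊆ F) :
    ∑ α ∈ u, mpow r α ≤ ∏ k ∈ F, (1 - r k)⁻¹ := by
  have h_sub : ∑ α ∈ u, mpow r α = ∑ α ∈ u.subtype (fun α : MultiIndex => α.support ⊆ F),
      mpow r α := by
    rw [Finset.sum_subtype_eq_sum_filter, Finset.filter_true_of_mem hu]
  rw [h_sub]
  exact sum_le_hasSum _ (fun α _ => mpow_nonneg hr0 _) (hasSum_mpow_of_support_subset hr0 hr1 F)

lemma multipliable_inv_one_sub {ι : Type*} {f : ι → ℝ} (hf1 : ∀ i, f i < 1) (hf : Summable f) :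
    Multipliable fun i => (1 - f i)⁻¹ :=
  Real.multipliable_of_summable_log (fun i => inv_pos.mpr (sub_pos.mpr (hf1 i)))
    ((Real.summable_log_one_add_of_summable hf.neg).neg.congr fun i => by
      rw [Real.log_inv, sub_eq_add_neg])

theorem hasSum_mpow (hr0 : ∀ k, 0 ≤ r k) (hr1 : ∀ k, r k < 1) (hr : Summable r) :
    HasSum (mpow r) (∏' k, (1 - r k)⁻¹) := by
  have hprod := (multipliable_inv_one_sub hr1 hr).hasProd
  have h_prod_le (F : Finset ℕ) : ∏ k ∈ F, (1 - r k)⁻¹ ≤ ∏' k, (1 - r k)⁻¹ :=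
    (Finset.prod_mono_set_of_one_le fun k =>
      (one_le_inv₀ (sub_pos.mpr (hr1 k))).mpr (sub_le_self _ (hr0 k))).ge_of_tendsto hprod F
  have h_sum_le (u : Finset MultiIndex) : ∑ α ∈ u, mpow r α ≤ ∏' k, (1 - r k)⁻¹ :=
    (sum_mpow_le_prod hr0 hr1 fun _ hα => Finset.le_sup hα).trans (h_prod_le _)
  have hsum : Summable (mpow r) := summable_of_sum_le (mpow_nonneg hr0) h_sum_le
  refine hsum.hasSum_iff.mpr (le_antisymm (hsum.tsum_le_of_sum_le h_sum_le) ?_)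
  refine le_of_tendsto' hprod fun F => ?_
  rw [← (hasSum_mpow_of_support_subset hr0 hr1 F).tsum_eq]
  exact hsum.tsum_subtype_le _ {α | α.support ⊆ F} (mpow_nonneg hr0)

end mpow

/-- `∑_α q^{-2α} = ∏ₖ (1-q_k^{-2})^{-1} < ∞` when `q_k > 1` and
`∑ₖ 1/q_k < ∞`; equivalently the embedding `L^{p+1}_{2,q} ⊂ L^p_{2,q}` is
Hilbert-Schmidt. -/
theorem stmt19 (q : ℕ → ℝ) (hq : ∀ k, 1 < q k) (hs : Summable fun k => 1 / q k) :
    Summable (fun α : MultiIndex => mpow (fun k => ((q k) ^ 2)⁻¹) α) ∧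
    ∑' α : MultiIndex, mpow (fun k => ((q k) ^ 2)⁻¹) α
      = ∏' k, (1 - ((q k) ^ 2)⁻¹)⁻¹ := by
  have hq0 (k : ℕ) : 0 < q k := one_pos.trans (hq k)
  have hr0 (k : ℕ) : 0 ≤ ((q k) ^ 2)⁻¹ := by positivity
  have hr1 (k : ℕ) : ((q k) ^ 2)⁻¹ < 1 := inv_lt_one_of_one_lt₀ (one_lt_pow₀ (hq k) two_ne_zero)
  have hr : Summable fun k => ((q k) ^ 2)⁻¹ := hs.of_nonneg_of_le hr0 fun k => by
    rw [one_div]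
    exact inv_anti₀ (hq0 k) (le_self_pow₀ (hq k).le two_ne_zero)
  have h := hasSum_mpow hr0 hr1 hr
  exact ⟨h.summable, h.tsum_eq⟩
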